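/- arXiv:1512.09072 — 2 statements merged into one kernel-verified Lean document; each statement's English description precedes it below -/
import Mathlib

section
/- Let m ∈ {1,…,n−1}, let w be a permutation of {1,…,n}, and let w′ be the permutation obtained from w by interchanging the values w(m) and w(m+1) (i.e. w′(m) = w(m+1), w′(m+1) = w(m), and w′(r) = w(r) for r ≠ m, m+1). Then for all i, j ∈ {1,…,n} with i ≥ j, i ≠ m and j ≠ m, one has f_{i,j}(w′) = f_{i,j}(w) in ℚ[t]. -/
/-- The variable `x_k` (for `1 ≤ k ≤ n`) in `ℚ[x_1,…,x_n,t]`, realized as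
`MvPolynomial (Fin (n+1)) ℚ` where the variable of index `0` is `t`. -/
noncomputable def xv (n k : ℕ) : MvPolynomial (Fin (n + 1)) ℚ :=
  if h : k ≤ n then MvPolynomial.X ⟨k, Nat.lt_succ_of_le h⟩ else 0

/-- The variable `t` in `ℚ[x_1,…,x_n,t]`. -/
noncomputable def tv (n : ℕ) : MvPolynomial (Fin (n + 1)) ℚ :=
  MvPolynomial.X 0

/-- `p_i := Σ_{k=1}^{i} (x_k − k·t)`, with `p_0 = 0`. -/
noncomputable def pp (n i : ℕ) : MvPolynomial (Fin (n + 1)) ℚ :=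
  ∑ k ∈ Finset.Icc 1 i, (xv n k - (k : MvPolynomial (Fin (n + 1)) ℚ) * tv n)

/-- The polynomials `f_{i,j}`: `f_{j,j} = p_j`, `f_{i,0} = 0`, and
`f_{i,j} = f_{i−1,j−1} + (x_j − x_i − t)·f_{i−1,j}` for `i > j ≥ 1`. -/
noncomputable def ff (n : ℕ) : ℕ → ℕ → MvPolynomial (Fin (n + 1)) ℚ
  | _, 0 => 0
  | 0, _ + 1 => 0
  | i + 1, j + 1 =>
    if i + 1 = j + 1 then pp n (j + 1)
    else ff n i j + (xv n (j + 1) - xv n (i + 1) - tv n) * ff n i (j + 1)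

/-- The `ℚ`-algebra homomorphism `ℚ[x_1,…,x_n,t] → ℚ[t]` sending `x_r ↦ w(r)·t` and
`t ↦ t`; applied to `f_{i,j}` it yields `f_{i,j}(w)`. -/
noncomputable def evf (n : ℕ) (w : ℕ → ℕ) : MvPolynomial (Fin (n + 1)) ℚ →ₐ[ℚ] Polynomial ℚ :=
  MvPolynomial.aeval fun v : Fin (n + 1) =>
    if (v : ℕ) = 0 then Polynomial.X else Polynomial.C ((w (v : ℕ) : ℚ)) * Polynomial.X

/-!
Evaluating at `w ∘ (m m+1)` is evaluating at `w` after swapping the variables `x_m` and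
`x_{m+1}`, so it suffices that this swap fixes the polynomial `f_{i,j}` whenever `i, j ≠ m`.
Rows `i < m` do not involve `x_m, x_{m+1}`. With `d = x_{m+1} - x_m`, the swap changes row `m`
by `f_{m,j} ↦ f_{m,j} - d f_{m-1,j}` for `j < m` and `f_{m,m} = p_m ↦ p_m + d`, and each row
`i > m` only in column `m`, by `f_{i,m} ↦ f_{i,m} + d f_{i,m+1}`; in the recursion these
corrections cancel in every other entry.
-/

open MvPolynomial

lemma ff_zero_right (n i : ℕ) : ff n i 0 = 0 := by
  cases i <;> rfl

lemma ff_zero_left (n j : ℕ) : ff n 0 j = 0 := by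
  cases j <;> rfl

lemma ff_succ_succ (n i j : ℕ) (h : i ≠ j) :
    ff n (i + 1) (j + 1) = ff n i j + (xv n (j + 1) - xv n (i + 1) - tv n) * ff n i (j + 1) := by
  rw [ff, if_neg (by omega)]

lemma ff_self (n j : ℕ) : ff n j j = pp n j := by
  cases j with
  | zero => simp [ff_zero_right, pp]
  | succ j => rw [ff, if_pos rfl]

lemma ff_eq_zero_of_lt (n : ℕ) {i j : ℕ} (h : i < j) : ff n i j = 0 := by
  induction i generalizing j with
  | zero => exact ff_zero_left n j
  | succ i ih =>
    obtain ⟨j, rfl⟩ : ∃ k, j = k + 1 := ⟨j - 1, by omega⟩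
    rw [ff_succ_succ n i j (by omega), ih (by omega), ih (by omega), mul_zero, add_zero]

lemma pp_succ (n j : ℕ) :
    pp n (j + 1) = pp n j + (xv n (j + 1) - ((j + 1 : ℕ) : MvPolynomial (Fin (n + 1)) ℚ) * tv n) := by
  rw [pp, pp, Finset.sum_Icc_succ_top (by omega)]

lemma xv_zero (n : ℕ) : xv n 0 = tv n := by
  simp [xv, tv]

/-- The substitution `x_k ↦ x_{π k}`; the variable `t` has index `0`, so it goes to `x_{π 0}`. -/
noncomputable def substVars (n : ℕ) (π : ℕ → ℕ) :
    MvPolynomial (Fin (n + 1)) ℚ →ₐ[ℚ] MvPolynomial (Fin (n + 1)) ℚ :=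
  aeval fun v => xv n (π v)

section substVars

variable {n : ℕ} {π : ℕ → ℕ}

lemma substVars_xv {k : ℕ} (hk : k ≤ n) : substVars n π (xv n k) = xv n (π k) := by
  simp [substVars, xv, hk]

lemma substVars_tv (hπ : π 0 = 0) : substVars n π (tv n) = tv n := by
  simp [substVars, tv, hπ, xv_zero]

lemma evf_comp_apply (hπ0 : π 0 = 0) (hπ : ∀ k, k ≠ 0 → k ≤ n → π k ≠ 0 ∧ π k ≤ n)
    (w : ℕ → ℕ) (p : MvPolynomial (Fin (n + 1)) ℚ) :
    evf n (w ∘ π) p = evf n w (substVars n π p) := by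
  rw [← AlgHom.comp_apply]
  congr 1
  refine algHom_ext fun v => ?_
  obtain ⟨k, hk⟩ := v
  by_cases hk0 : k = 0
  · subst hk0
    simp [evf, substVars, hπ0, xv]
  · obtain ⟨h0, hn⟩ := hπ k hk0 (by omega)
    simp [evf, substVars, xv, hk0, h0, hn]

end substVars

section swap

variable {n m : ℕ}

local notation "σ" => substVars n (Equiv.swap m (m + 1))

lemma swap_xv (hm : m + 1 ≤ n) (k : ℕ) : σ (xv n k) = xv n (Equiv.swap m (m + 1) k) := by
  by_cases hk : k ≤ n
  · exact substVars_xv hk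
  · rw [Equiv.swap_apply_of_ne_of_ne (by omega) (by omega)]
    simp [xv, hk]

lemma swap_xv_of_ne (hm : m + 1 ≤ n) {k : ℕ} (hk : k ≠ m) (hk' : k ≠ m + 1) :
    σ (xv n k) = xv n k := by
  rw [swap_xv hm, Equiv.swap_apply_of_ne_of_ne hk hk']

lemma swap_tv (hm : 1 ≤ m) : σ (tv n) = tv n :=
  substVars_tv (Equiv.swap_apply_of_ne_of_ne (by omega) (by omega))

lemma swap_pp (hm1 : 1 ≤ m) (hm2 : m + 1 ≤ n) (j : ℕ) :
    σ (pp n j) = pp n j + if j = m then xv n (m + 1) - xv n m else 0 := by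
  induction j with
  | zero =>
    rw [if_neg (by omega)]
    simp [pp]
  | succ j ih =>
    rw [pp_succ, map_add, map_sub, map_mul, map_natCast, ih, swap_xv hm2, swap_tv hm1]
    by_cases hj : j + 1 = m
    · subst hj
      rw [Equiv.swap_apply_left, if_neg (by omega), if_pos rfl]
      ring
    by_cases hj' : j = m
    · subst hj'
      rw [Equiv.swap_apply_right, if_pos rfl, if_neg (by omega)]
      ring
    · rw [Equiv.swap_apply_of_ne_of_ne hj (by omega), if_neg hj', if_neg hj]
      ring

lemma swap_ff_succ_succ (hm : 1 ≤ m) {i j : ℕ} (h : i ≠ j) :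
    σ (ff n (i + 1) (j + 1)) =
      σ (ff n i j) + (σ (xv n (j + 1)) - σ (xv n (i + 1)) - tv n) * σ (ff n i (j + 1)) := by
  rw [ff_succ_succ n i j h, map_add, map_mul, map_sub, map_sub, swap_tv hm]

lemma swap_ff_of_lt (hm1 : 1 ≤ m) (hm2 : m + 1 ≤ n) {i : ℕ} (hi : i < m) (j : ℕ) :
    σ (ff n i j) = ff n i j := by
  induction i generalizing j with
  | zero => rw [ff_zero_left, map_zero]
  | succ i ih =>
    cases j with
    | zero => rw [ff_zero_right, map_zero]
    | succ j =>
      rcases lt_trichotomy i j with h | rfl | h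
      · rw [ff_eq_zero_of_lt n (by omega), map_zero]
      · rw [ff_self, swap_pp hm1 hm2, if_neg (by omega), add_zero]
      · rw [swap_ff_succ_succ hm1 (by omega), ih (by omega), ih (by omega),
          swap_xv_of_ne hm2 (by omega) (by omega), swap_xv_of_ne hm2 (by omega) (by omega),
          ff_succ_succ n i j (by omega)]

lemma swap_ff_of_succ_eq (hm1 : 1 ≤ m) (hm2 : m + 1 ≤ n) {i j : ℕ} (hi : i + 1 = m)
    (hj : j ≤ i) :
    σ (ff n (i + 1) j) = ff n (i + 1) j - (xv n (m + 1) - xv n m) * ff n i j := by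
  cases j with
  | zero => simp [ff_zero_right]
  | succ j =>
    subst hi
    rw [swap_ff_succ_succ hm1 (by omega), swap_ff_of_lt hm1 hm2 (by omega),
      swap_ff_of_lt hm1 hm2 (by omega), swap_xv_of_ne hm2 (by omega) (by omega), swap_xv hm2,
      Equiv.swap_apply_left, ff_succ_succ n i j (by omega)]
    ring

lemma swap_ff_self (hm1 : 1 ≤ m) (hm2 : m + 1 ≤ n) :
    σ (ff n m m) = ff n m m + (xv n (m + 1) - xv n m) := by
  rw [ff_self, swap_pp hm1 hm2, if_pos rfl]

lemma swap_ff_succ_of_ne (hm1 : 1 ≤ m) (hm2 : m + 1 ≤ n) {j : ℕ} (hj : j ≠ m) :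
    σ (ff n (m + 1) j) = ff n (m + 1) j := by
  obtain ⟨M, rfl⟩ : ∃ M, m = M + 1 := ⟨m - 1, by omega⟩
  cases j with
  | zero => rw [ff_zero_right, map_zero]
  | succ j =>
    rcases lt_trichotomy (M + 1) j with h | rfl | h
    · rw [ff_eq_zero_of_lt n (by omega), map_zero]
    · rw [ff_self, swap_pp hm1 hm2, if_neg hj, add_zero]
    · rw [swap_ff_succ_succ hm1 (by omega), swap_ff_of_succ_eq hm1 hm2 rfl (by omega),
        swap_ff_of_succ_eq hm1 hm2 rfl (by omega), swap_xv_of_ne hm2 (by omega) (by omega),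
        swap_xv hm2, Equiv.swap_apply_right, ff_succ_succ n (M + 1) j (by omega),
        ff_succ_succ n M j (by omega)]
      ring

lemma swap_ff_succ_self (hm1 : 1 ≤ m) (hm2 : m + 1 ≤ n) :
    σ (ff n (m + 1) m) = ff n (m + 1) m + (xv n (m + 1) - xv n m) * ff n (m + 1) (m + 1) := by
  obtain ⟨M, rfl⟩ : ∃ M, m = M + 1 := ⟨m - 1, by omega⟩
  rw [swap_ff_succ_succ hm1 (by omega), swap_ff_of_succ_eq hm1 hm2 rfl le_rfl,
    swap_ff_self hm1 hm2, swap_xv hm2, swap_xv hm2, Equiv.swap_apply_left,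
    Equiv.swap_apply_right, ff_succ_succ n (M + 1) M (by omega)]
  simp only [ff_self]
  rw [pp_succ n (M + 1), pp_succ n M]
  push_cast
  ring

lemma swap_ff_of_gt (hm1 : 1 ≤ m) (hm2 : m + 1 ≤ n) {i : ℕ} (hi : m < i) :
    (∀ j, j ≠ m → σ (ff n i j) = ff n i j) ∧
      σ (ff n i m) = ff n i m + (xv n (m + 1) - xv n m) * ff n i (m + 1) := by
  induction i, hi using Nat.le_induction with
  | base => exact ⟨fun j hj => swap_ff_succ_of_ne hm1 hm2 hj, swap_ff_succ_self hm1 hm2⟩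
  | succ i hi ih =>
    obtain ⟨hfix, hcol⟩ := ih
    constructor
    · intro j hj
      cases j with
      | zero => rw [ff_zero_right, map_zero]
      | succ j =>
        rcases lt_trichotomy i j with h | rfl | h
        · rw [ff_eq_zero_of_lt n (by omega), map_zero]
        · rw [ff_self, swap_pp hm1 hm2, if_neg hj, add_zero]
        · rw [swap_ff_succ_succ hm1 (by omega), swap_xv_of_ne (k := i + 1) hm2 (by omega) (by omega),
            ff_succ_succ n i j (by omega)]
          by_cases hjm : j = m
          · subst hjm
            rw [hcol, hfix _ hj, swap_xv hm2, Equiv.swap_apply_right]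
            ring
          · rw [hfix j hjm, hfix _ hj, swap_xv_of_ne hm2 hj (by omega)]
    · obtain ⟨M, rfl⟩ : ∃ M, m = M + 1 := ⟨m - 1, by omega⟩
      rw [swap_ff_succ_succ hm1 (by omega), hfix M (by omega), hcol, swap_xv hm2,
        Equiv.swap_apply_left, swap_xv_of_ne hm2 (by omega) (by omega),
        ff_succ_succ n i M (by omega), ff_succ_succ n i (M + 1) (by omega)]
      ring

lemma swap_ff_of_ne (hm1 : 1 ≤ m) (hm2 : m + 1 ≤ n) {i j : ℕ} (hi : i ≠ m) (hj : j ≠ m) :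
    σ (ff n i j) = ff n i j := by
  rcases hi.lt_or_gt with h | h
  · exact swap_ff_of_lt hm1 hm2 h j
  · exact (swap_ff_of_gt hm1 hm2 h).1 j hj

lemma evf_swap_apply (hm1 : 1 ≤ m) (hm2 : m + 1 ≤ n) (w : ℕ → ℕ)
    (p : MvPolynomial (Fin (n + 1)) ℚ) :
    evf n (w ∘ Equiv.swap m (m + 1)) p = evf n w (σ p) := by
  refine evf_comp_apply (Equiv.swap_apply_of_ne_of_ne (by omega) (by omega)) (fun k hk hkn => ?_) w p
  rw [Equiv.swap_apply_def]
  split_ifs <;> omega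

end swap

theorem stmt8_general (n m : ℕ) (hm1 : 1 ≤ m) (hm2 : m + 1 ≤ n)
    (w : Equiv.Perm ℕ)
    (i j : ℕ) (him : i ≠ m) (hjm : j ≠ m) :
    evf n (fun r => w (Equiv.swap m (m + 1) r)) (ff n i j) = evf n ⇑w (ff n i j) := by
  have h := evf_swap_apply hm1 hm2 w (ff n i j)
  rwa [swap_ff_of_ne hm1 hm2 him hjm] at h

/-- Let `m ∈ {1,…,n−1}`, let `w` be a permutation of `{1,…,n}` (modelled as
`w : Equiv.Perm ℕ` fixing every point outside `{1,…,n}`), and let `w' = w ∘ (m m+1)` be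
obtained from `w` by interchanging the values `w(m)` and `w(m+1)`.  Then for all
`i ≥ j` in `{1,…,n}` with `i ≠ m` and `j ≠ m`, `f_{i,j}(w') = f_{i,j}(w)` in `ℚ[t]`. -/
theorem stmt8 (n m : ℕ) (hm1 : 1 ≤ m) (hm2 : m + 1 ≤ n)
    (w : Equiv.Perm ℕ) (hw : ∀ r, r ∉ Finset.Icc 1 n → w r = r)
    (i j : ℕ) (hj : 1 ≤ j) (hji : j ≤ i) (hin : i ≤ n) (him : i ≠ m) (hjm : j ≠ m) :
    evf n (fun r => w (Equiv.swap m (m + 1) r)) (ff n i j) = evf n ⇑w (ff n i j) :=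
  stmt8_general n m hm1 hm2 w i j him hjm
end

section
/- Fix a Hessenberg function h : {1,…,n} → {1,…,n} and fix j, k ∈ {1,…,n}. For each permutation w of {1,…,n}, define g_{j,k}(w) ∈ ℚ[t_1,…,t_n] by g_{j,k}(w) := Π_{ℓ=j+1}^{h(j)} (t_k − t_{w(ℓ)}) if k ∈ {w(1),…,w(j)}, and g_{j,k}(w) := 0 otherwise (with the empty product equal to 1). Then for every permutation w and every pair a, b ∈ {1,…,n} with a < b and b ≤ h(a), the polynomial t_{w(a)} − t_{w(b)} divides g_{j,k}(w) − g_{j,k}(w∘(a b)) in ℚ[t_1,…,t_n], where (a b) denotes the transposition of a and b. -/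
/-!
Work modulo `d = t (w a) - t (w b)`. There `t ∘ w` and `t ∘ w ∘ (a b)` agree pointwise, so the
two products agree. The membership conditions `k ∈ w(I)` and `k ∈ (w ∘ (a b))(I)` can only differ
when `k ∈ {w a, w b}` and exactly one of `a, b` lies in `I = [1, j]`; then `a ≤ j < b ≤ h a ≤ h j`
puts `b` in the product range `S = [j + 1, h j]`, so the product has the factor `t k - t (w b)`,
which vanishes modulo `d`.
-/

/-- A Hessenberg function `h : {1,…,n} → {1,…,n}`. -/
def IsHessenberg (n : ℕ) (h : ℕ → ℕ) : Prop :=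
  (∀ i, 1 ≤ i → i ≤ n → i ≤ h i ∧ h i ≤ n) ∧
  (∀ i, 1 ≤ i → i + 1 ≤ n → h i ≤ h (i + 1))

/-- The variable `t_k` (for `1 ≤ k ≤ n`) in `ℚ[t_1,…,t_n]`, realized as
`MvPolynomial (Fin n) ℚ` (with the variable of index `k-1` being `t_k`). -/
noncomputable def tvar (n k : ℕ) : MvPolynomial (Fin n) ℚ :=
  if h : 1 ≤ k ∧ k ≤ n then MvPolynomial.X ⟨k - 1, by omega⟩ else 0

/-- `g_{j,k}(w) := Π_{ℓ=j+1}^{h(j)} (t_k − t_{w(ℓ)})` if `k ∈ {w(1),…,w(j)}`, and `0`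
otherwise (with the empty product equal to `1`). -/
noncomputable def gjk (n : ℕ) (h : ℕ → ℕ) (j k : ℕ) (w : ℕ → ℕ) :
    MvPolynomial (Fin n) ℚ :=
  if k ∈ (Finset.Icc 1 j).image w then
    ∏ l ∈ Finset.Icc (j + 1) (h j), (tvar n k - tvar n (w l))
  else 0

theorem IsHessenberg.monotoneOn {n : ℕ} {h : ℕ → ℕ} (hh : IsHessenberg n h) :
    MonotoneOn h (Set.Icc 1 n) :=
  monotoneOn_of_le_succ Set.ordConnected_Icc fun i _ hi hi' => hh.2 i hi.1 hi'.2

section SwapDivisibility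

variable {ι α R : Type*} [DecidableEq ι] [DecidableEq α] [CommRing R]

noncomputable def condDiffProd (I S : Finset ι) (t : α → R) (k : α) (v : ι → α) : R :=
  if k ∈ I.image v then ∏ l ∈ S, (t k - t (v l)) else 0

theorem Finset.mem_image_comp_swap_of_mem {I : Finset ι} {v : ι → α} {a b : ι} {k : α}
    (h : (a ∈ I ↔ b ∈ I) ∨ k ≠ v a ∧ k ≠ v b) (hk : k ∈ I.image v) :
    k ∈ I.image (v ∘ Equiv.swap a b) := by
  obtain ⟨r, hr, rfl⟩ := Finset.mem_image.1 hk
  refine Finset.mem_image.2 ⟨Equiv.swap a b r, ?_, by simp⟩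
  rcases eq_or_ne r a with rfl | hra
  · rw [Equiv.swap_apply_left]; tauto
  rcases eq_or_ne r b with rfl | hrb
  · rw [Equiv.swap_apply_right]; tauto
  rwa [Equiv.swap_apply_of_ne_of_ne hra hrb]

theorem Finset.mem_image_comp_swap_iff {I : Finset ι} {v : ι → α} {a b : ι} {k : α}
    (h : (a ∈ I ↔ b ∈ I) ∨ k ≠ v a ∧ k ≠ v b) :
    k ∈ I.image (v ∘ Equiv.swap a b) ↔ k ∈ I.image v := by
  refine ⟨fun hk => ?_, mem_image_comp_swap_of_mem h⟩
  have h' : (a ∈ I ↔ b ∈ I) ∨ k ≠ (v ∘ Equiv.swap a b) a ∧ k ≠ (v ∘ Equiv.swap a b) b := by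
    simpa [and_comm] using h
  simpa [Function.comp_def] using mem_image_comp_swap_of_mem h' hk

theorem sub_dvd_condDiffProd_sub_comp_swap {I S : Finset ι} {t : α → R} {k : α} {v : ι → α}
    {a b : ι} (hab : a ∈ I → b ∉ I → b ∈ S) (hba : b ∈ I → a ∉ I → a ∈ S) :
    t (v a) - t (v b) ∣ condDiffProd I S t k v - condDiffProd I S t k (v ∘ Equiv.swap a b) := by
  unfold condDiffProd
  rw [← Ideal.Quotient.eq_zero_iff_dvd, map_sub, sub_eq_zero]
  set π := Ideal.Quotient.mk (Ideal.span {t (v a) - t (v b)})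
  have hπab : π (t (v a)) = π (t (v b)) := by
    rw [← sub_eq_zero, ← map_sub, Ideal.Quotient.eq_zero_iff_dvd]
  have hπswap : ∀ l, π (t (v (Equiv.swap a b l))) = π (t (v l)) := by
    intro l
    rcases eq_or_ne l a with rfl | hla
    · rw [Equiv.swap_apply_left, hπab]
    rcases eq_or_ne l b with rfl | hlb
    · rw [Equiv.swap_apply_right, hπab]
    rw [Equiv.swap_apply_of_ne_of_ne hla hlb]
  have hprod :
      π (∏ l ∈ S, (t k - t ((v ∘ Equiv.swap a b) l))) = π (∏ l ∈ S, (t k - t (v l))) := by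
    simp only [map_prod, map_sub, Function.comp_apply, hπswap]
  by_cases hc : (a ∈ I ↔ b ∈ I) ∨ k ≠ v a ∧ k ≠ v b
  · simp only [Finset.mem_image_comp_swap_iff hc]
    split_ifs
    exacts [hprod.symm, rfl]
  rw [not_or, not_and_or, not_ne_iff, not_ne_iff] at hc
  have hπk : π (t k) = π (t (v a)) := by
    rcases hc.2 with rfl | rfl
    exacts [rfl, hπab.symm]
  have hvanish : π (∏ l ∈ S, (t k - t (v l))) = 0 := by
    have hS : a ∈ S ∨ b ∈ S := by
      by_cases ha : a ∈ I <;> by_cases hb : b ∈ I <;> tauto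
    rw [map_prod]
    rcases hS with hS | hS
    · exact Finset.prod_eq_zero hS (by rw [map_sub, hπk, sub_self])
    · exact Finset.prod_eq_zero hS (by rw [map_sub, hπk, hπab, sub_self])
  simp only [apply_ite π, hprod, hvanish, map_zero, ite_self]

end SwapDivisibility

theorem gjk_eq_condDiffProd (n : ℕ) (h : ℕ → ℕ) (j k : ℕ) (w : ℕ → ℕ) :
    gjk n h j k w = condDiffProd (Finset.Icc 1 j) (Finset.Icc (j + 1) (h j)) (tvar n) k w :=
  rfl

theorem stmt15_general (n : ℕ) (h : ℕ → ℕ) (hh : IsHessenberg n h)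
    (j k : ℕ) (hjn : j ≤ n) (w : Equiv.Perm ℕ) :
    ∀ a b, 1 ≤ a → a < b → b ≤ n → b ≤ h a →
      (tvar n (w a) - tvar n (w b)) ∣
        (gjk n h j k ⇑w - gjk n h j k fun r => w (Equiv.swap a b r)) := by
  intro a b ha hab _ hbha
  rw [gjk_eq_condDiffProd, gjk_eq_condDiffProd]
  refine sub_dvd_condDiffProd_sub_comp_swap (fun haI hbI => ?_) (fun hbI haI => ?_)
  · simp only [Finset.mem_Icc, not_and, not_le] at haI hbI ⊢
    have hhaj : h a ≤ h j := hh.monotoneOn ⟨ha, by omega⟩ ⟨by omega, hjn⟩ haI.2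
    omega
  · simp only [Finset.mem_Icc] at hbI haI
    omega

/-- For `w` a permutation of `{1,…,n}` (modelled as `w : Equiv.Perm ℕ` fixing every point
outside `{1,…,n}`) and `a, b ∈ {1,…,n}` with `a < b ≤ h(a)`, the polynomial
`t_{w(a)} − t_{w(b)}` divides `g_{j,k}(w) − g_{j,k}(w ∘ (a b))` in `ℚ[t_1,…,t_n]`. -/
theorem stmt15 (n : ℕ) (h : ℕ → ℕ) (hh : IsHessenberg n h)
    (j k : ℕ) (hj : 1 ≤ j) (hjn : j ≤ n) (hk : 1 ≤ k) (hkn : k ≤ n)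
    (w : Equiv.Perm ℕ) (hw : ∀ r, r ∉ Finset.Icc 1 n → w r = r) :
    ∀ a b, 1 ≤ a → a < b → b ≤ n → b ≤ h a →
      (tvar n (w a) - tvar n (w b)) ∣
        (gjk n h j k ⇑w - gjk n h j k fun r => w (Equiv.swap a b r)) :=
  stmt15_general n h hh j k hjn w
end
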